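/- Let Θ ⊆ ℝ^p be open, let ℓ_j : Θ → ℝ (j = 1, …, m) and α₁ : Θ → ℝ be differentiable, define the tilted weights w_j(θ) = exp(α₁(θ) ℓ_j(θ))/Σ_{k=1}^m exp(α₁(θ) ℓ_k(θ)) and the composite objective ℓ(θ) = Σ_{j=1}^m w_j(θ) ℓ_j(θ). Then for every θ ∈ Θ the gradient of the composite objective obeys the exact decomposition ∇_θ ℓ(θ) = ( Σ_{j=1}^m w_j(θ) (ℓ_j(θ) − ℓ(θ))² ) ∇_θ α₁(θ) + α₁(θ) Σ_{j=1}^m w_j(θ) (ℓ_j(θ) − ℓ(θ)) ∇_θ ℓ_j(θ) + Σ_{j=1}^m w_j(θ) ∇_θ ℓ_j(θ), where the first coefficient Σ_j w_j(θ)(ℓ_j(θ) − ℓ(θ))² is the weighted dispersion of the components ℓ_j(θ) around ℓ(θ). -/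

import Mathlib

/-! The tilted weights are the softmax of `g_j = α₁ ℓ_j`. Writing the softmax as
`exp (g_j - log ∑ exp g_k)` shows `∇w_j = w_j (∇g_j - ∑ w_k ∇g_k)`, so the gradient of
`ℓ = ∑ w_j ℓ_j` is the covariance term `∑ w_j (ℓ_j - ℓ) ∇g_j` plus `∑ w_j ∇ℓ_j`. The product
rule `∇g_j = ℓ_j ∇α₁ + α₁ ∇ℓ_j` splits the covariance term, and its `∇α₁`-coefficient
`∑ w_j (ℓ_j - ℓ) ℓ_j` is the dispersion because the centred weights `w_j (ℓ_j - ℓ)` sum to zero. -/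

open Finset Real

section Softmax

variable {ι : Type*} [Fintype ι]

noncomputable def softmax (z : ι → ℝ) (j : ι) : ℝ :=
  exp (z j) / ∑ k, exp (z k)

theorem softmax_eq_exp_sub_log [Nonempty ι] (z : ι → ℝ) (j : ι) :
    softmax z j = exp (z j - log (∑ k, exp (z k))) := by
  rw [exp_sub, exp_log (sum_pos (fun k _ => exp_pos (z k)) univ_nonempty), softmax]

theorem sum_softmax [Nonempty ι] (z : ι → ℝ) : ∑ j, softmax z j = 1 := by
  simp only [softmax, ← sum_div]
  exact div_self (sum_pos (fun k _ => exp_pos (z k)) univ_nonempty).ne'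

end Softmax

section WeightedSum

variable {ι : Type*} [Fintype ι]

theorem sum_smul_smul_sub_sum_smul {R M : Type*} [CommRing R] [AddCommGroup M] [Module R M]
    (a w : ι → R) (v : ι → M) :
    ∑ j, a j • w j • (v j - ∑ k, w k • v k) = ∑ j, (w j * (a j - ∑ k, w k * a k)) • v j := by
  simp only [smul_sub, sum_sub_distrib, mul_sub, sub_smul, smul_smul, ← sum_smul, mul_comm (a _)]
  simp only [smul_sum, smul_smul, mul_comm (w _)]

theorem sum_mul_sub_mul_self_eq_sum_mul_sub_sq {R : Type*} [CommRing R] {w a : ι → R}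
    (hw : ∑ j, w j = 1) :
    ∑ j, w j * (a j - ∑ k, w k * a k) * a j = ∑ j, w j * (a j - ∑ k, w k * a k) ^ 2 := by
  set μ := ∑ k, w k * a k
  have hcentered : ∑ j, w j * (a j - μ) = 0 := by
    simp only [mul_sub, sum_sub_distrib, ← sum_mul, hw, one_mul, μ, sub_self]
  calc ∑ j, w j * (a j - μ) * a j = ∑ j, w j * (a j - μ) * a j - (∑ j, w j * (a j - μ)) * μ := by
        rw [hcentered, zero_mul, sub_zero]
    _ = ∑ j, w j * (a j - μ) ^ 2 := by
        rw [sum_mul, ← sum_sub_distrib]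
        exact sum_congr rfl fun j _ => by ring

end WeightedSum

section Derivatives

variable {E : Type*} [NormedAddCommGroup E] [NormedSpace ℝ E] {ι : Type*} [Fintype ι] [Nonempty ι]
  {g : ι → E → ℝ} {g' : ι → E →L[ℝ] ℝ} {x : E}

theorem hasFDerivAt_log_sum_exp (hg : ∀ j, HasFDerivAt (g j) (g' j) x) :
    HasFDerivAt (fun y => log (∑ k, exp (g k y))) (∑ k, softmax (g · x) k • g' k) x := by
  have := (HasFDerivAt.fun_sum fun k (_ : k ∈ univ) => (hg k).exp).log
    (sum_pos (fun k _ => exp_pos (g k x)) univ_nonempty).ne'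
  convert this using 1
  simp only [smul_sum, smul_smul, softmax, div_eq_inv_mul]

theorem hasFDerivAt_softmax (hg : ∀ j, HasFDerivAt (g j) (g' j) x) (j : ι) :
    HasFDerivAt (fun y => softmax (g · y) j)
      (softmax (g · x) j • (g' j - ∑ k, softmax (g · x) k • g' k)) x := by
  convert ((hg j).fun_sub (hasFDerivAt_log_sum_exp hg)).exp using 1
  · exact funext fun y => softmax_eq_exp_sub_log _ j
  · rw [softmax_eq_exp_sub_log]

theorem hasFDerivAt_sum_softmax_mul {f : ι → E → ℝ} {f' : ι → E →L[ℝ] ℝ}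
    (hg : ∀ j, HasFDerivAt (g j) (g' j) x) (hf : ∀ j, HasFDerivAt (f j) (f' j) x) :
    HasFDerivAt (fun y => ∑ j, softmax (g · y) j * f j y)
      (∑ j, (softmax (g · x) j * (f j x - ∑ k, softmax (g · x) k * f k x)) • g' j
        + ∑ j, softmax (g · x) j • f' j) x := by
  refine (HasFDerivAt.fun_sum fun j (_ : j ∈ univ) =>
    (hasFDerivAt_softmax hg j).mul (hf j)).congr_fderiv ?_
  rw [sum_add_distrib, sum_smul_smul_sub_sum_smul, add_comm]

end Derivatives

theorem gradient_decomposition_general (p m : ℕ) (hm : 0 < m)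
    (Θ : Set (EuclideanSpace ℝ (Fin p)))
    (ℓ : Fin m → EuclideanSpace ℝ (Fin p) → ℝ)
    (α₁ : EuclideanSpace ℝ (Fin p) → ℝ)
    (hℓdiff : ∀ j, ∀ θ ∈ Θ, DifferentiableAt ℝ (ℓ j) θ)
    (hαdiff : ∀ θ ∈ Θ, DifferentiableAt ℝ α₁ θ)
    (w : Fin m → EuclideanSpace ℝ (Fin p) → ℝ)
    (hw : ∀ j θ, w j θ = Real.exp (α₁ θ * ℓ j θ) / ∑ k, Real.exp (α₁ θ * ℓ k θ))
    (L : EuclideanSpace ℝ (Fin p) → ℝ)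
    (hL : ∀ θ, L θ = ∑ j, w j θ * ℓ j θ) :
    ∀ θ ∈ Θ,
      fderiv ℝ L θ =
        (∑ j, w j θ * (ℓ j θ - L θ) ^ 2) • fderiv ℝ α₁ θ
          + α₁ θ • ∑ j, (w j θ * (ℓ j θ - L θ)) • fderiv ℝ (ℓ j) θ
          + ∑ j, w j θ • fderiv ℝ (ℓ j) θ := by
  intro θ hθ
  have : Nonempty (Fin m) := ⟨⟨0, hm⟩⟩
  obtain rfl : w = fun j θ => softmax (fun k => α₁ θ * ℓ k θ) j := funext₂ hw
  obtain rfl : L = fun θ => ∑ j, softmax (fun k => α₁ θ * ℓ k θ) j * ℓ j θ := funext hL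
  have hℓ j := (hℓdiff j θ hθ).hasFDerivAt
  rw [(hasFDerivAt_sum_softmax_mul (fun j => (hαdiff θ hθ).hasFDerivAt.fun_mul (hℓ j)) hℓ).fderiv]
  beta_reduce
  rw [← sum_mul_sub_mul_self_eq_sum_mul_sub_sq (a := (ℓ · θ)) (sum_softmax _), sum_smul, smul_sum]
  congr 1
  simp only [smul_add, sum_add_distrib, smul_smul, mul_comm _ (α₁ θ)]
  exact add_comm _ _

/-- Exact decomposition of the gradient of the composite objective
`ℓ(θ) = ∑ w_j(θ) ℓ_j(θ)` with tilted weights: the gradient equals the weighted dispersion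
of the components times `∇α₁`, plus `α₁ ∑ w_j (ℓ_j − ℓ) ∇ℓ_j`, plus `∑ w_j ∇ℓ_j`. -/
theorem gradient_decomposition (p m : ℕ) (hm : 0 < m)
    (Θ : Set (EuclideanSpace ℝ (Fin p))) (hΘ : IsOpen Θ)
    (ℓ : Fin m → EuclideanSpace ℝ (Fin p) → ℝ)
    (α₁ : EuclideanSpace ℝ (Fin p) → ℝ)
    (hℓdiff : ∀ j, ∀ θ ∈ Θ, DifferentiableAt ℝ (ℓ j) θ)
    (hαdiff : ∀ θ ∈ Θ, DifferentiableAt ℝ α₁ θ)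
    (w : Fin m → EuclideanSpace ℝ (Fin p) → ℝ)
    (hw : ∀ j θ, w j θ = Real.exp (α₁ θ * ℓ j θ) / ∑ k, Real.exp (α₁ θ * ℓ k θ))
    (L : EuclideanSpace ℝ (Fin p) → ℝ)
    (hL : ∀ θ, L θ = ∑ j, w j θ * ℓ j θ) :
    ∀ θ ∈ Θ,
      fderiv ℝ L θ =
        (∑ j, w j θ * (ℓ j θ - L θ) ^ 2) • fderiv ℝ α₁ θ
          + α₁ θ • ∑ j, (w j θ * (ℓ j θ - L θ)) • fderiv ℝ (ℓ j) θ
          + ∑ j, w j θ • fderiv ℝ (ℓ j) θ :=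
  gradient_decomposition_general p m hm Θ ℓ α₁ hℓdiff hαdiff w hw L hL
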